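/- arXiv:2602.02211 — 9 statements merged into one kernel-verified Lean document; each statement's English description precedes it below -/
import Mathlib

section
/- The sampling relation ([κ]^ω, ii) is Tukey equivalent to the covering relation ([κ]^ω, ⊆); in particular the sampling number sam(κ) (the least size of a family of countable subsets of κ meeting every countably infinite subset of κ in an infinite set) equals the covering number cov(κ) (the least size of a family of countable subsets of κ such that every countable subset is contained in some member). -/
open Cardinal Set

universe u v w x

def RelCofinal {α : Type u} {β : Type v} (R : α → β → Prop) (C : Set β) : Prop :=
  ∀ a : α, ∃ b ∈ C, R a b

noncomputable def relCof {α : Type u} {β : Type v} (R : α → β → Prop) : Cardinal.{v} :=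
  sInf {c | ∃ C : Set β, RelCofinal R C ∧ #C = c}

def TukeyLE {α : Type u} {β : Type v} {γ : Type w} {δ : Type x}
    (R : α → β → Prop) (S : γ → δ → Prop) : Prop :=
  ∃ φ : β → δ, ∀ C : Set β, RelCofinal R C → RelCofinal S (φ '' C)

theorem relCof_le_of_tukeyLE {α : Type u} {γ : Type w} {β : Type v}
    {R : α → β → Prop} {S : γ → β → Prop} (h : TukeyLE R S)
    (hne : {c | ∃ C : Set β, RelCofinal R C ∧ #C = c}.Nonempty) :
    relCof S ≤ relCof R := by
  obtain ⟨φ, hφ⟩ := h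
  obtain ⟨C, hC, hCc⟩ : relCof R ∈ {c | ∃ C : Set β, RelCofinal R C ∧ #C = c} :=
    csInf_mem hne
  calc relCof S ≤ #(φ '' C) := csInf_le' ⟨φ '' C, hφ C hC, rfl⟩
    _ ≤ #C := Cardinal.mk_image_le
    _ = relCof R := hCc

/-- The sampling relation ([κ]^ω, ii) is Tukey equivalent to the covering relation
([κ]^ω, ⊆), and hence sam(κ) = cov(κ). -/
theorem stmt0 {κ : Type u} [Infinite κ] :
    TukeyLE (fun A B : {S : Set κ // S.Countable ∧ S.Infinite} => A.1 ⊆ B.1)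
      (fun A B : {S : Set κ // S.Countable ∧ S.Infinite} => (A.1 ∩ B.1).Infinite) ∧
    TukeyLE (fun A B : {S : Set κ // S.Countable ∧ S.Infinite} => (A.1 ∩ B.1).Infinite)
      (fun A B : {S : Set κ // S.Countable ∧ S.Infinite} => A.1 ⊆ B.1) ∧
    relCof (fun A B : {S : Set κ // S.Countable ∧ S.Infinite} => (A.1 ∩ B.1).Infinite) =
      relCof (fun A B : {S : Set κ // S.Countable ∧ S.Infinite} => A.1 ⊆ B.1) := by
  set T := {S : Set κ // S.Countable ∧ S.Infinite} with hT
  -- an encoding of finite lists of κ into κ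
  obtain ⟨c⟩ : Nonempty (κ ≃ List κ) := Cardinal.eq.mp (Cardinal.mk_list_eq_mk κ).symm
  -- the nontrivial Tukey map: B ↦ B ∪ all entries of lists coded by elements of B
  have hφmem : ∀ B : T, (B.1 ∪ ⋃ b ∈ B.1, {x | x ∈ c b}).Countable ∧
      (B.1 ∪ ⋃ b ∈ B.1, {x | x ∈ c b}).Infinite := by
    intro B
    refine ⟨B.2.1.union (Countable.biUnion B.2.1 fun b _ => (c b).finite_toSet.countable),
      B.2.2.mono subset_union_left⟩
  set φ : T → T := fun B => ⟨B.1 ∪ ⋃ b ∈ B.1, {x | x ∈ c b}, hφmem B⟩ with hφ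
  -- first direction: identity works
  have h1 : TukeyLE (fun A B : T => A.1 ⊆ B.1) (fun A B : T => (A.1 ∩ B.1).Infinite) := by
    refine ⟨id, fun C hC A => ?_⟩
    obtain ⟨B, hB, hAB⟩ := hC A
    exact ⟨B, ⟨B, hB, rfl⟩, A.2.2.mono (subset_inter subset_rfl hAB)⟩
  -- second direction: φ works
  have h2 : TukeyLE (fun A B : T => (A.1 ∩ B.1).Infinite) (fun A B : T => A.1 ⊆ B.1) := by
    refine ⟨φ, fun C hC A => ?_⟩
    -- enumerate A
    haveI : Countable A.1 := A.2.1.to_subtype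
    haveI : Infinite A.1 := A.2.2.to_subtype
    obtain ⟨e⟩ : Nonempty (ℕ ≃ A.1) := nonempty_equiv_of_countable
    -- codes of initial segments of A
    set g : ℕ → κ := fun n => c.symm ((List.range (n + 1)).map fun i => (e i : κ)) with hg
    have hginj : Function.Injective g := by
      intro m n hmn
      have := c.symm.injective hmn
      have hlen := congrArg List.length this
      simpa using hlen
    have hEcnt : (Set.range g).Countable := countable_range g
    have hEinf : (Set.range g).Infinite := Set.infinite_range_of_injective hginj
    obtain ⟨B, hB, hAB⟩ := hC ⟨Set.range g, hEcnt, hEinf⟩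
    refine ⟨φ B, ⟨B, hB, rfl⟩, ?_⟩
    intro a ha
    -- a = e m for some m
    set m : ℕ := e.symm ⟨a, ha⟩ with hm
    have ham : (e m : κ) = a := by simp [hm]
    -- find n > m with g n ∈ B
    have hsub : Set.range g ∩ B.1 ⊆ Set.range g := inter_subset_left
    have hpre : (g ⁻¹' (Set.range g ∩ B.1)).Infinite := hAB.preimage hsub
    obtain ⟨n, hn, hmn⟩ := hpre.exists_gt m
    have hgnB : g n ∈ B.1 := hn.2
    -- a appears in the list coded by g n
    have haL : a ∈ c (g n) := by
      have : c (g n) = (List.range (n + 1)).map fun i => (e i : κ) := by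
        simp [hg]
      rw [this, List.mem_map]
      exact ⟨m, by simpa using Nat.lt_succ_of_lt hmn, ham⟩
    exact Set.mem_union_right _ (Set.mem_biUnion hgnB haL)
  refine ⟨h1, h2, ?_⟩
  -- nonemptiness of the cofinal-set families (univ is cofinal for both)
  have hne1 : {c | ∃ C : Set T, RelCofinal (fun A B : T => A.1 ⊆ B.1) C ∧ #C = c}.Nonempty :=
    ⟨#(Set.univ : Set T), Set.univ, fun A => ⟨A, mem_univ A, subset_rfl⟩, rfl⟩
  have hne2 : {c | ∃ C : Set T,
      RelCofinal (fun A B : T => (A.1 ∩ B.1).Infinite) C ∧ #C = c}.Nonempty :=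
    ⟨#(Set.univ : Set T), Set.univ, fun A => ⟨A, mem_univ A, by simpa using A.2.2⟩, rfl⟩
  exact le_antisymm (relCof_le_of_tukeyLE h1 hne1) (relCof_le_of_tukeyLE h2 hne2)
end

section
/- If κ is a singular cardinal of countable cofinality admitting a mod-finite scale of regular length λ (i.e. some product ∏A over a suitable set A for κ carries a <*-increasing, <*-cofinal sequence of length λ), then cov(κ) ≥ λ. -/
open Cardinal Set

universe u v w x

/-- The relation of containment on countable subsets of (the underlying set of) κ. -/
def covRel (κ : Cardinal.{0}) :
    {S : Set κ.ord.ToType // S.Countable} → {S : Set κ.ord.ToType // S.Countable} → Prop :=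
  fun S T => S.1 ⊆ T.1

/-- cov(κ): the least size of a family of countable subsets of κ such that every
countable subset of κ is contained in some member. -/
noncomputable def covNum (κ : Cardinal.{0}) : Cardinal.{0} := relCof (covRel κ)


/-- A is suitable for κ: countable set of uncountable regular cardinals with sup κ. -/
def Suitable (A : Set Cardinal.{0}) (κ : Cardinal.{0}) : Prop :=
  A.Countable ∧ (∀ μ ∈ A, Cardinal.aleph0 < μ ∧ μ.IsRegular) ∧ sSup A = κ

/-- The eventual domination (mod finite) relation on the product ∏A. -/
def prodRel (A : Set Cardinal.{0}) :
    {f : A → Ordinal // ∀ μ : A, f μ < (μ : Cardinal).ord} →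
    {f : A → Ordinal // ∀ μ : A, f μ < (μ : Cardinal).ord} → Prop :=
  fun f g => {μ : A | g.1 μ ≤ f.1 μ}.Finite


/-- If a singular κ of countable cofinality admits a mod-finite scale of regular
length λ, then cov(κ) ≥ λ. -/
theorem stmt8 (κ lam : Cardinal.{0}) (hκ : Cardinal.aleph0 < κ)
    (hcof : κ.ord.cof = Cardinal.aleph0) (hlam : lam.IsRegular)
    (hscale : ∃ A : Set Cardinal.{0}, Suitable A κ ∧
      ∃ f : {o : Ordinal // o < lam.ord} →
          {f : A → Ordinal // ∀ μ : A, f μ < (μ : Cardinal).ord},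
        (∀ α β, α.1 < β.1 → prodRel A (f α) (f β)) ∧
        (∀ g, ∃ α, prodRel A g (f α))) :
    lam ≤ covNum κ := by
  classical
  by_contra hlt
  push_neg at hlt
  obtain ⟨A, ⟨hAc, hAreg, hAsup⟩, f, hinc, hcofin⟩ := hscale
  have hAcount : Countable ↥A := hAc.to_subtype
  have hAbdd : BddAbove A := Cardinal.bddAbove_iff_small.2 inferInstance
  have hmem : ∀ μ : A, (μ : Cardinal) ≤ κ := fun μ => hAsup ▸ le_csSup hAbdd μ.2
  -- A is infinite
  have hAinf : A.Infinite := by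
    intro hfin
    have hne : A.Nonempty := by
      rcases A.eq_empty_or_nonempty with h | h
      · exfalso
        rw [h, csSup_empty] at hAsup
        rw [← hAsup] at hκ
        simp at hκ
      · exact h
    have hκA : κ ∈ A := hAsup ▸ hne.csSup_mem hfin
    exact hκ.ne' (((hAreg _ hκA).2.cof_eq).symm.trans hcof)
  have hAinf' : Infinite ↥A := hAinf.to_subtype
  -- extract a minimal covering family
  have hSne : {c | ∃ C : Set {S : Set κ.ord.ToType // S.Countable},
      RelCofinal (covRel κ) C ∧ #C = c}.Nonempty :=
    ⟨#(Set.univ : Set {S : Set κ.ord.ToType // S.Countable}), Set.univ,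
      fun a => ⟨a, Set.mem_univ a, subset_rfl⟩, rfl⟩
  obtain ⟨C, hCcof, hCcard⟩ := csInf_mem hSne
  have hClt : #C < lam := by
    have : covNum κ = sInf {c | ∃ C : Set {S : Set κ.ord.ToType // S.Countable},
        RelCofinal (covRel κ) C ∧ #C = c} := rfl
    rw [hCcard, ← this]; exact hlt
  set iso := (Ordinal.ToType.mk (o := κ.ord)) with hiso
  -- the dominating function attached to a countable set
  have hord_lim : ∀ μ : A, Order.IsSuccLimit ((μ : Cardinal).ord) := fun μ =>
    Cardinal.isSuccLimit_ord (hAreg _ μ.2).1.le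
  let gfun : {S : Set κ.ord.ToType // S.Countable} → (↥A → Ordinal) := fun S μ =>
    ⨆ x : S.1, if ((iso.symm x : Set.Iio κ.ord) : Ordinal) < (μ : Cardinal).ord
      then ((iso.symm x : Set.Iio κ.ord) : Ordinal) + 1 else 0
  have hglt : ∀ S (μ : ↥A), gfun S μ < (μ : Cardinal).ord := by
    intro S μ
    have hcnt : Countable ↥S.1 := S.2.to_subtype
    refine Cardinal.iSup_lt_ord_of_isRegular (hAreg _ μ.2).2
      (lt_of_le_of_lt Cardinal.mk_le_aleph0 (hAreg _ μ.2).1) ?_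
    intro x
    split_ifs with h
    · rw [Ordinal.add_one_eq_succ]
      exact (hord_lim μ).succ_lt h
    · exact (hord_lim μ).pos
  have hgdom : ∀ (S : {S : Set κ.ord.ToType // S.Countable}) (x : κ.ord.ToType),
      x ∈ S.1 → ∀ μ : ↥A,
      ((iso.symm x : Set.Iio κ.ord) : Ordinal) < (μ : Cardinal).ord →
      ((iso.symm x : Set.Iio κ.ord) : Ordinal) < gfun S μ := by
    intro S x hx μ h
    have hb : BddAbove (Set.range fun x : S.1 =>
        if ((iso.symm x : Set.Iio κ.ord) : Ordinal) < (μ : Cardinal).ord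
        then ((iso.symm x : Set.Iio κ.ord) : Ordinal) + 1 else 0) :=
      Ordinal.bddAbove_range _
    have hle := le_ciSup hb (⟨x, hx⟩ : S.1)
    rw [if_pos h] at hle
    refine lt_of_lt_of_le ?_ hle
    rw [Ordinal.add_one_eq_succ]
    exact Order.lt_succ _
  let G : {S : Set κ.ord.ToType // S.Countable} →
      {g : ↥A → Ordinal // ∀ μ : ↥A, g μ < (μ : Cardinal).ord} :=
    fun S => ⟨gfun S, hglt S⟩
  let af : {S : Set κ.ord.ToType // S.Countable} → {o : Ordinal // o < lam.ord} :=
    fun S => (hcofin (G S)).choose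
  have haf : ∀ S, prodRel A (G S) (f (af S)) := fun S => (hcofin (G S)).choose_spec
  have hlamlim : Order.IsSuccLimit lam.ord := Cardinal.isSuccLimit_ord hlam.aleph0_le
  have hβ : (⨆ S : C, (af S.1).1 + 1) < lam.ord := by
    refine Cardinal.iSup_lt_ord_of_isRegular hlam hClt ?_
    intro S
    rw [Ordinal.add_one_eq_succ]
    exact hlamlim.succ_lt (af S.1).2
  set β : {o : Ordinal // o < lam.ord} := ⟨_, hβ⟩ with hβdef
  have hαβ : ∀ S : C, (af S.1).1 < β.1 := by
    intro S
    have hle := le_ciSup (Ordinal.bddAbove_range fun S : C => (af S.1).1 + 1) S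
    refine lt_of_lt_of_le ?_ hle
    rw [Ordinal.add_one_eq_succ]
    exact Order.lt_succ _
  have hflt : ∀ (α : {o : Ordinal // o < lam.ord}) (μ : ↥A), (f α).1 μ < κ.ord :=
    fun α μ => lt_of_lt_of_le ((f α).2 μ) (Cardinal.ord_le_ord.2 (hmem μ))
  let R : Set κ.ord.ToType := Set.range fun μ : ↥A => iso ⟨(f β).1 μ, hflt β μ⟩
  have hRc : R.Countable := Set.countable_range _
  obtain ⟨S₀, hS₀C, hsub⟩ := hCcof ⟨R, hRc⟩
  have hkey : ∀ μ : ↥A, (f β).1 μ < gfun S₀ μ := by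
    intro μ
    have hx : iso ⟨(f β).1 μ, hflt β μ⟩ ∈ S₀.1 := hsub ⟨μ, rfl⟩
    have h2 := hgdom S₀ _ hx μ
    rw [OrderIso.symm_apply_apply] at h2
    exact h2 ((f β).2 μ)
  have F1 := hinc (af S₀) β (hαβ ⟨S₀, hS₀C⟩)
  have F2 := haf S₀
  obtain ⟨μ, hμ⟩ := ((F1.union F2).infinite_compl).nonempty
  simp only [Set.mem_compl_iff, Set.mem_union, Set.mem_setOf_eq, not_or, not_le] at hμ
  exact absurd ((hkey μ).trans (hμ.2.trans hμ.1)) (lt_irrefl _)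
end

section
/- If κ = μ⁺ is a successor cardinal with μ uncountable, then cov(κ) = cov(μ) · κ (cardinal product, i.e. max). -/
open Cardinal Set

universe u v w x

/-! ### Auxiliary machinery -/

/-- typein for the canonical well-order on `o.ToType`. -/
noncomputable def otypein (o : Ordinal.{0}) (x : o.ToType) : Ordinal.{0} :=
  @Ordinal.typein o.ToType (· < ·) isWellOrder_lt x

lemma otypein_lt (o : Ordinal.{0}) (x : o.ToType) : otypein o x < o := by
  have := @Ordinal.typein_lt_type o.ToType (· < ·) isWellOrder_lt x
  rwa [Ordinal.type_toType] at this

lemma otypein_lt_iff (o : Ordinal.{0}) (x y : o.ToType) :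
    otypein o x < otypein o y ↔ x < y :=
  @Ordinal.typein_lt_typein o.ToType (· < ·) isWellOrder_lt x y

lemma otypein_surj (o : Ordinal.{0}) {p : Ordinal.{0}} (h : p < o) :
    ∃ x, otypein o x = p :=
  @Ordinal.typein_surj o.ToType (· < ·) isWellOrder_lt p (by rwa [Ordinal.type_toType])

lemma card_otypein (o : Ordinal.{0}) (x : o.ToType) :
    #{y : o.ToType // y < x} = (otypein o x).card :=
  @Ordinal.card_typein o.ToType (· < ·) isWellOrder_lt x

/-- The countable-subsets containment relation on an arbitrary type. -/
def ctblRel (γ : Type) : {S : Set γ // S.Countable} → {S : Set γ // S.Countable} → Prop :=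
  fun S T => S.1 ⊆ T.1

noncomputable def covT (γ : Type) : Cardinal.{0} := relCof (ctblRel γ)

lemma covNum_eq_covT (κ : Cardinal.{0}) : covNum κ = covT κ.ord.ToType := rfl

lemma relCof_le_mk {α : Type u} {β : Type v} {R : α → β → Prop} {C : Set β}
    (h : RelCofinal R C) : relCof R ≤ #C :=
  csInf_le' ⟨C, h, rfl⟩

lemma relCof_le_of_family {α : Type u} {β : Type v} {R : α → β → Prop} {ι : Type v}
    (g : ι → β) (h : ∀ a, ∃ i, R a (g i)) : relCof R ≤ #ι := by
  refine (relCof_le_mk (C := Set.range g) ?_).trans Cardinal.mk_range_le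
  intro a
  obtain ⟨i, hi⟩ := h a
  exact ⟨g i, ⟨i, rfl⟩, hi⟩

lemma exists_cofinal_covT (γ : Type) :
    ∃ C : Set {S : Set γ // S.Countable}, RelCofinal (ctblRel γ) C ∧ #C = covT γ := by
  have hne : ({c | ∃ C : Set {S : Set γ // S.Countable},
      RelCofinal (ctblRel γ) C ∧ #C = c}).Nonempty := by
    refine ⟨#(Set.univ : Set {S : Set γ // S.Countable}), Set.univ, ?_, rfl⟩
    intro a; exact ⟨a, Set.mem_univ a, subset_rfl⟩
  obtain ⟨C, hC, hc⟩ := csInf_mem hne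
  exact ⟨C, hC, hc⟩

lemma covT_mono {γ δ : Type} (f : γ ↪ δ) : covT γ ≤ covT δ := by
  obtain ⟨D, hD, hDc⟩ := exists_cofinal_covT δ
  rw [← hDc]
  refine relCof_le_of_family (ι := ↥D)
    (fun T => ⟨f ⁻¹' T.1.1, T.1.2.preimage f.injective⟩) ?_
  intro S
  obtain ⟨T, hT, hST⟩ := hD ⟨f '' S.1, S.2.image f⟩
  exact ⟨⟨T, hT⟩, fun x hx => hST (Set.mem_image_of_mem f hx)⟩

lemma covT_mono_of_mk_le {γ δ : Type} (h : #γ ≤ #δ) : covT γ ≤ covT δ := by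
  obtain ⟨f⟩ := (Cardinal.le_def γ δ).1 h
  exact covT_mono f

lemma le_covT {γ : Type} (h : ℵ₀ < #γ) : #γ ≤ covT γ := by
  obtain ⟨C, hC, hCc⟩ := exists_cofinal_covT γ
  have hcover : (Set.univ : Set γ) ⊆ ⋃ T : ↥C, T.1.1 := by
    intro x _
    obtain ⟨T, hT, hxT⟩ := hC ⟨{x}, Set.countable_singleton x⟩
    exact Set.mem_iUnion.2 ⟨⟨T, hT⟩, hxT rfl⟩
  have hCne : Nonempty ↥C := by
    obtain ⟨T, hT, -⟩ := hC ⟨∅, Set.countable_empty⟩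
    exact ⟨⟨T, hT⟩⟩
  have h1 : #γ ≤ #↥C * ℵ₀ := by
    calc #γ = #(Set.univ : Set γ) := Cardinal.mk_univ.symm
    _ ≤ #(⋃ T : ↥C, T.1.1) := Cardinal.mk_le_mk_of_subset hcover
    _ ≤ #↥C * ⨆ T : ↥C, #T.1.1 := Cardinal.mk_iUnion_le _
    _ ≤ #↥C * ℵ₀ := by
        refine mul_le_mul_right (ciSup_le' fun T => ?_) _
        exact Cardinal.mk_le_aleph0_iff.2 T.1.2.to_subtype
  rcases le_or_gt (#↥C) ℵ₀ with h2 | h2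
  · exfalso
    have : #γ ≤ ℵ₀ := h1.trans (by
      calc #↥C * ℵ₀ ≤ ℵ₀ * ℵ₀ := mul_le_mul_left h2 _
      _ = ℵ₀ := Cardinal.aleph0_mul_aleph0)
    exact absurd this (not_le.2 h)
  · rw [← hCc]
    refine h1.trans ?_
    rw [Cardinal.mul_eq_max h2.le le_rfl]
    exact max_le le_rfl h2.le

/-- If κ = μ⁺ with μ uncountable then cov(κ) = cov(μ) · κ. -/
theorem stmt11 (μ : Cardinal.{0}) (hμ : Cardinal.aleph0 < μ) :
    covNum (Order.succ μ) = covNum μ * Order.succ μ := by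
  set κ := Order.succ μ with hκ
  have hμκ : μ < κ := Order.lt_succ μ
  have hℵκ : ℵ₀ < κ := hμ.trans hμκ
  have hreg : Cardinal.IsRegular κ := Cardinal.isRegular_succ hμ.le
  have hmkκ : #κ.ord.ToType = κ := by rw [Cardinal.mk_toType, Cardinal.card_ord]
  have hmkμ : #μ.ord.ToType = μ := by rw [Cardinal.mk_toType, Cardinal.card_ord]
  -- κ ≤ covNum κ
  have hκle : κ ≤ covNum κ := by
    rw [covNum_eq_covT]
    calc κ = #κ.ord.ToType := hmkκ.symm
    _ ≤ covT κ.ord.ToType := le_covT (by rwa [hmkκ])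
  -- covNum μ ≤ covNum κ
  have hμle : covNum μ ≤ covNum κ := by
    rw [covNum_eq_covT, covNum_eq_covT]
    exact covT_mono_of_mk_le (by rw [hmkκ, hmkμ]; exact hμκ.le)
  have hℵcov : ℵ₀ ≤ covNum κ := hℵκ.le.trans hκle
  -- upper bound: covNum κ ≤ covNum μ * κ
  have hub : covNum κ ≤ covNum μ * κ := by
    have hseg : ∀ α : κ.ord.ToType, covT ↥(Set.Iio α) ≤ covNum μ := by
      intro α
      rw [covNum_eq_covT]
      refine covT_mono_of_mk_le ?_
      rw [hmkμ]
      have h1 : #↥(Set.Iio α) = (otypein κ.ord α).card := card_otypein κ.ord α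
      have h3 : (otypein κ.ord α).card < κ := Cardinal.lt_ord.1 (otypein_lt κ.ord α)
      rw [h1]
      exact Order.lt_succ_iff.1 h3
    choose D hDcof hDmk using fun α : κ.ord.ToType => exists_cofinal_covT ↥(Set.Iio α)
    rw [covNum_eq_covT]
    have key : covT κ.ord.ToType ≤ #(Σ α : κ.ord.ToType, ↥(D α)) := by
      refine relCof_le_of_family
        (fun p : Σ α : κ.ord.ToType, ↥(D α) =>
          ⟨Subtype.val '' p.2.1.1, p.2.1.2.image _⟩) ?_
      intro S
      have hbound : ∃ α : κ.ord.ToType, ∀ x ∈ S.1, x < α := by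
        have hcount : #↥S.1 < κ.ord.cof := by
          rw [hreg.cof_eq]
          exact (Cardinal.mk_le_aleph0_iff.2 S.2.to_subtype).trans_lt hℵκ
        have hlim : Order.IsSuccLimit κ.ord := Cardinal.isSuccLimit_ord hℵκ.le
        have hflt : ∀ x : ↥S.1, Order.succ (otypein κ.ord x.1) < κ.ord :=
          fun x => hlim.succ_lt (otypein_lt κ.ord x.1)
        have hsup : iSup (fun x : ↥S.1 => Order.succ (otypein κ.ord x.1)) < κ.ord :=
          Ordinal.iSup_lt_ord hcount hflt
        obtain ⟨α, hα⟩ := otypein_surj κ.ord hsup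
        refine ⟨α, fun x hx => ?_⟩
        refine (otypein_lt_iff κ.ord x α).1 ?_
        rw [hα]
        exact lt_of_lt_of_le (Order.lt_succ _)
          (Ordinal.le_iSup (fun x : ↥S.1 => Order.succ (otypein κ.ord x.1)) ⟨x, hx⟩)
      obtain ⟨α, hα⟩ := hbound
      obtain ⟨T, hT, hST⟩ := hDcof α
        ⟨Subtype.val ⁻¹' S.1, S.2.preimage Subtype.val_injective⟩
      refine ⟨⟨α, ⟨T, hT⟩⟩, fun x hx => ?_⟩
      exact ⟨⟨x, hα x hx⟩, hST hx, rfl⟩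
    refine key.trans ?_
    calc #(Σ α : κ.ord.ToType, ↥(D α)) = Cardinal.sum fun α => #↥(D α) :=
          Cardinal.mk_sigma _
    _ ≤ Cardinal.sum fun _ : κ.ord.ToType => covNum μ :=
          Cardinal.sum_le_sum _ _ fun α => (hDmk α).le.trans (hseg α)
    _ = #κ.ord.ToType * covNum μ := Cardinal.sum_const' _ _
    _ = covNum μ * κ := by rw [hmkκ, mul_comm]
  -- lower bound: covNum μ * κ ≤ covNum κ
  have hlb : covNum μ * κ ≤ covNum κ := by
    calc covNum μ * κ ≤ covNum κ * covNum κ := mul_le_mul' hμle hκle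
    _ = covNum κ := Cardinal.mul_eq_self hℵcov
  exact le_antisymm hub hlb
end

section
/- If κ is an uncountable limit cardinal of uncountable cofinality, then cov(κ) = sup{cov(μ) : μ < κ, μ infinite}. -/
open Cardinal Set

universe u v w x

namespace CovAux

lemma exists_cover (κ : Cardinal.{0}) :
    ∃ C : Set {S : Set κ.ord.ToType // S.Countable},
      RelCofinal (covRel κ) C ∧ #C = covNum κ := by
  have hne : {c | ∃ C : Set {S : Set κ.ord.ToType // S.Countable},
      RelCofinal (covRel κ) C ∧ #C = c}.Nonempty :=
    ⟨_, Set.univ, fun a => ⟨a, mem_univ a, subset_rfl⟩, rfl⟩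
  obtain ⟨C, hC, hc⟩ := csInf_mem hne
  exact ⟨C, hC, hc⟩

lemma covNum_le {κ : Cardinal.{0}} {C : Set {S : Set κ.ord.ToType // S.Countable}}
    (hC : RelCofinal (covRel κ) C) : covNum κ ≤ #C :=
  csInf_le' ⟨C, hC, rfl⟩

lemma covNum_mono {μ κ : Cardinal.{0}} (h : μ ≤ κ) : covNum μ ≤ covNum κ := by
  obtain ⟨C, hC, hc⟩ := exists_cover κ
  obtain ⟨f⟩ : Nonempty (μ.ord.ToType ↪ κ.ord.ToType) := by
    rw [← Cardinal.le_def, Cardinal.mk_toType, Cardinal.mk_toType, card_ord, card_ord]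
    exact h
  let φ : {S : Set κ.ord.ToType // S.Countable} → {S : Set μ.ord.ToType // S.Countable} :=
    fun S => ⟨f ⁻¹' S.1, S.2.preimage f.injective⟩
  have hcof : RelCofinal (covRel μ) (φ '' C) := by
    intro A
    obtain ⟨S, hS, hsub⟩ := hC ⟨f '' A.1, A.2.image f⟩
    exact ⟨φ S, mem_image_of_mem φ hS, fun x hx => (Set.image_subset_iff.1 hsub) hx⟩
  calc covNum μ ≤ #(φ '' C) := covNum_le hcof
    _ ≤ #C := mk_image_le
    _ = covNum κ := hc

lemma le_covNum {μ : Cardinal.{0}} (hμ : Cardinal.aleph0 < μ) : μ ≤ covNum μ := by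
  obtain ⟨C, hC, hc⟩ := exists_cover μ
  have hCne : C.Nonempty := by
    obtain ⟨S, hS, -⟩ := hC ⟨∅, countable_empty⟩
    exact ⟨S, hS⟩
  haveI : Nonempty C := hCne.to_subtype
  have hu : ⋃ S : C, ((S : {S : Set μ.ord.ToType // S.Countable}) : Set μ.ord.ToType) = (Set.univ : Set μ.ord.ToType) := by
    apply eq_univ_of_forall
    intro x
    obtain ⟨S, hS, hsub⟩ := hC ⟨{x}, countable_singleton x⟩
    exact mem_iUnion.2 ⟨⟨S, hS⟩, hsub rfl⟩
  have h1 : μ ≤ #C * Cardinal.aleph0 := by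
    calc μ = #(μ.ord.ToType) := by rw [Cardinal.mk_toType, card_ord]
      _ = #(⋃ S : C, ((S : {S : Set μ.ord.ToType // S.Countable}) : Set μ.ord.ToType)) := by
          rw [hu, mk_univ]
      _ ≤ #C * ⨆ S : C, #((S : {S : Set μ.ord.ToType // S.Countable}) : Set μ.ord.ToType) :=
          mk_iUnion_le _
      _ ≤ #C * Cardinal.aleph0 := by
          refine mul_le_mul_right (ciSup_le' fun S => ?_) _
          haveI := (S : {S : Set μ.ord.ToType // S.Countable}).2.to_subtype
          exact mk_le_aleph0
  have h2 : μ ≤ max (max #C Cardinal.aleph0) Cardinal.aleph0 := h1.trans (mul_le_max _ _)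
  rcases le_max_iff.1 h2 with h3 | h3
  · rcases le_max_iff.1 h3 with h4 | h4
    · exact hc ▸ h4
    · exact absurd h4 (not_le.2 hμ)
  · exact absurd h3 (not_le.2 hμ)

end CovAux

open CovAux in
/-- If κ is an uncountable limit cardinal of uncountable cofinality then
cov(κ) = sup{cov(μ) : μ < κ, μ infinite}. -/
theorem stmt12 (κ : Cardinal.{0}) (hκ : Cardinal.aleph0 < κ)
    (hlim : ∀ μ < κ, Order.succ μ < κ) (hcof : Cardinal.aleph0 < κ.ord.cof) :
    covNum κ = sSup {c : Cardinal.{0} | ∃ μ,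
      Cardinal.aleph0 ≤ μ ∧ μ < κ ∧ covNum μ = c} := by
  set Sset := {c : Cardinal.{0} | ∃ μ, Cardinal.aleph0 ≤ μ ∧ μ < κ ∧ covNum μ = c} with hSset
  have hbdd : BddAbove Sset := by
    refine ⟨covNum κ, ?_⟩
    rintro c ⟨μ, -, hμκ, rfl⟩
    exact covNum_mono hμκ.le
  -- κ ≤ sSup Sset
  have hκle : κ ≤ sSup Sset := by
    by_contra h
    push_neg at h
    set ν := Order.succ (max (sSup Sset) Cardinal.aleph0) with hν
    have hν0 : Cardinal.aleph0 < ν := lt_of_le_of_lt (le_max_right _ _) (Order.lt_succ _)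
    have hνκ : ν < κ := hlim _ (max_lt h hκ)
    have hmem : covNum ν ∈ Sset := ⟨ν, hν0.le, hνκ, rfl⟩
    have : ν ≤ sSup Sset := (le_covNum hν0).trans (le_csSup hbdd hmem)
    exact absurd ((Order.lt_succ (max (sSup Sset) Cardinal.aleph0)).trans_le
      (hν ▸ this)) (not_lt.2 (le_max_left _ _))
  haveI : Nonempty κ.ord.ToType :=
    Cardinal.nonempty_ord_toType (aleph0_pos.trans hκ).ne'
  -- the key upper bound
  have hstep : ∀ t : κ.ord.ToType, ∃ F : Set {S : Set κ.ord.ToType // S.Countable},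
      #F ≤ sSup Sset ∧ ∀ A : Set κ.ord.ToType, A.Countable → A ⊆ Set.Iio t →
        ∃ S ∈ F, A ⊆ S.1 := by
    intro t
    set ν := max Cardinal.aleph0 #(Set.Iio t) with hν
    have hν0 : Cardinal.aleph0 ≤ ν := le_max_left _ _
    have hνκ : ν < κ := max_lt hκ (by have := Cardinal.mk_Iio_lt t (by rw [Cardinal.mk_ord_toType, Ordinal.type_toType]); rwa [Cardinal.mk_ord_toType] at this)
    obtain ⟨D, hD, hd⟩ := exists_cover ν
    obtain ⟨g⟩ : Nonempty (↥(Set.Iio t) ↪ ν.ord.ToType) := by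
      rw [← Cardinal.le_def, Cardinal.mk_toType, card_ord]
      exact le_max_right _ _
    refine ⟨(fun S : {S : Set ν.ord.ToType // S.Countable} =>
        (⟨Subtype.val '' (g ⁻¹' S.1), ((S.2.preimage g.injective).image _)⟩ :
          {S : Set κ.ord.ToType // S.Countable})) '' D, ?_, ?_⟩
    · calc #_ ≤ #D := mk_image_le
        _ = covNum ν := hd
        _ ≤ sSup Sset := le_csSup hbdd ⟨ν, hν0, hνκ, rfl⟩
    · intro A hA hAt
      obtain ⟨S, hS, hsub⟩ :=
        hD ⟨g '' (Subtype.val ⁻¹' A), ((hA.preimage Subtype.val_injective).image g)⟩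
      refine ⟨_, mem_image_of_mem _ hS, ?_⟩
      intro x hx
      have hxt : x ∈ Set.Iio t := hAt hx
      exact ⟨⟨x, hxt⟩, hsub (mem_image_of_mem g hx), rfl⟩
  choose F hF1 hF2 using hstep
  have hcofinal : RelCofinal (covRel κ) (⋃ t, F t) := by
    intro A
    have hb : Set.Bounded (· < ·) A.1 := by
      have hnc : ¬ IsCofinal A.1 := fun hc => by
        haveI := A.2.to_subtype
        have := Order.cof_le hc
        rw [Ordinal.cof_toType] at this
        exact absurd (this.trans mk_le_aleph0) (not_le.2 hcof)
      simp only [IsCofinal, not_forall, not_exists, not_and, not_le] at hnc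
      exact hnc
    obtain ⟨t, ht⟩ := hb
    obtain ⟨S, hS, hsub⟩ := hF2 t A.1 A.2 (fun x hx => ht x hx)
    exact ⟨S, mem_iUnion.2 ⟨t, hS⟩, hsub⟩
  have key : covNum κ ≤ κ * sSup Sset := by
    calc covNum κ ≤ #(⋃ t, F t) := covNum_le hcofinal
      _ ≤ #(κ.ord.ToType) * ⨆ t, #(F t) := mk_iUnion_le _
      _ ≤ κ * sSup Sset := by
          rw [Cardinal.mk_toType, card_ord]
          exact mul_le_mul_right (ciSup_le' hF1) _
  have hmul : κ * sSup Sset = sSup Sset := by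
    rw [mul_eq_max hκ.le (hκ.le.trans hκle), max_eq_right hκle]
  refine le_antisymm (key.trans_eq hmul) ?_
  refine csSup_le ⟨covNum Cardinal.aleph0, Cardinal.aleph0, le_rfl, hκ, rfl⟩ ?_
  rintro c ⟨μ, -, hμκ, rfl⟩
  exact covNum_mono hμκ.le
end

section
/- Let κ be an uncountable cardinal and (κ_n)_{n∈ω} a (not necessarily strictly) increasing sequence of infinite cardinals with supremum κ. Then the cofinality of the relation ((∏_n [κ_n]^{<ω})_∞, i_∞) equals sam(κ) · 𝔟. -/
open Cardinal Set

universe u v w x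

/-- The bounding number 𝔟: least size of a family in ω^ω unbounded in <*. -/
noncomputable def bNum : Cardinal.{0} :=
  sInf {c | ∃ F : Set (ℕ → ℕ),
    (∀ g : ℕ → ℕ, ∃ f ∈ F, ¬ {n | g n ≤ f n}.Finite) ∧ #F = c}


/-- sam(κ): the cofinality of the infinite-intersection relation on countably
infinite subsets of K (a set of size κ). -/
noncomputable def samNum (K : Type) : Cardinal.{0} :=
  relCof (fun S T : {S : Set K // S.Countable ∧ S.Infinite} => (S.1 ∩ T.1).Infinite)

/- ### Auxiliary lemmas -/

lemma bSet_nonempty : {c | ∃ F : Set (ℕ → ℕ),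
    (∀ g : ℕ → ℕ, ∃ f ∈ F, ¬ {n | g n ≤ f n}.Finite) ∧ #F = c}.Nonempty := by
  refine ⟨_, Set.univ, fun g => ⟨g, mem_univ g, ?_⟩, rfl⟩
  have : {n | g n ≤ g n} = Set.univ := by ext n; simp
  rw [this]
  exact Set.infinite_univ

lemma aleph0_le_bNum : ℵ₀ ≤ bNum := by
  refine le_csInf bSet_nonempty ?_
  rintro c ⟨F, hF, rfl⟩
  by_contra h
  push_neg at h
  have hFfin : F.Finite := lt_aleph0_iff_set_finite.mp h
  obtain ⟨f, hfF, hf⟩ := hF (fun n => (hFfin.toFinset.sup (fun f => f n)) + 1)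
  apply hf
  have : {n | (hFfin.toFinset.sup (fun f => f n)) + 1 ≤ f n} = ∅ := by
    ext n
    simp only [mem_setOf_eq, mem_empty_iff_false, iff_false, not_le, Nat.lt_succ_iff]
    exact Finset.le_sup (f := fun f => f n) (hFfin.mem_toFinset.mpr hfF)
  rw [this]
  exact finite_empty

lemma samSet_nonempty (K : Type) : {c | ∃ C : Set {S : Set K // S.Countable ∧ S.Infinite},
    RelCofinal (fun S T : {S : Set K // S.Countable ∧ S.Infinite} => (S.1 ∩ T.1).Infinite) C
    ∧ #C = c}.Nonempty := by
  refine ⟨_, Set.univ, fun S => ⟨S, mem_univ S, ?_⟩, rfl⟩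
  show (S.1 ∩ S.1).Infinite
  rw [Set.inter_self]
  exact S.2.2

lemma mk_le_samNum (K : Type) (hK : ℵ₀ < #K) : #K ≤ samNum K := by
  refine le_csInf (samSet_nonempty K) ?_
  rintro c ⟨C, hC, rfl⟩
  by_contra h
  push_neg at h
  set U : Set K := ⋃ S : C, (S.1 : {S : Set K // S.Countable ∧ S.Infinite}).1 with hU
  have hUcard : #U < #K := by
    refine lt_of_le_of_lt (mk_iUnion_le _) ?_
    refine mul_lt_of_lt hK.le h ?_
    refine lt_of_le_of_lt ?_ hK
    exact ciSup_le' fun S => (mk_le_aleph0_iff.mpr S.1.2.1.to_subtype)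
  have hcompl : (Uᶜ : Set K).Infinite := by
    by_contra hfin
    rw [Set.not_infinite] at hfin
    have h2 : #(Uᶜ : Set K) < #K := lt_of_lt_of_le (lt_aleph0_iff_set_finite.mpr hfin) hK.le
    have h3 := mk_sum_compl U
    have h4 : #U + #(Uᶜ : Set K) < #K := Cardinal.add_lt_of_lt hK.le hUcard h2
    rw [h3] at h4
    exact lt_irrefl _ h4
  -- pick a countably infinite subset of the complement
  let e : ℕ ↪ ↥(Uᶜ : Set K) := hcompl.natEmbedding _
  have heinj : Function.Injective (fun k => ((e k : ↥(Uᶜ : Set K)) : K)) :=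
    Subtype.coe_injective.comp e.injective
  set T : Set K := Set.range (fun k => ((e k : ↥(Uᶜ : Set K)) : K)) with hT
  have hTsub : T ⊆ Uᶜ := by rintro x ⟨k, rfl⟩; exact (e k).2
  obtain ⟨S, hSC, hSint⟩ := hC ⟨T, countable_range _, infinite_range_of_injective heinj⟩
  have : (T ∩ S.1) = ∅ := by
    apply eq_empty_of_forall_notMem
    rintro x ⟨hxT, hxS⟩
    exact hTsub hxT (Set.mem_iUnion.mpr ⟨⟨S, hSC⟩, hxS⟩)
  rw [this] at hSint
  exact hSint finite_empty
lemma samNum_le_of_cofinal (K : Type) (A : ℕ → Set K) (hmono : Monotone A)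
    (hinf : ∀ n, (A n).Infinite) (hunion : ⋃ n, A n = Set.univ)
    (C : Set {F : ℕ → Set K //
        (∀ n, (F n).Finite ∧ F n ⊆ A n) ∧ {n | (F n).Nonempty}.Infinite})
    (hC : RelCofinal (fun (F G : {F : ℕ → Set K //
        (∀ n, (F n).Finite ∧ F n ⊆ A n) ∧ {n | (F n).Nonempty}.Infinite}) =>
      {n | (F.1 n ∩ G.1 n).Nonempty}.Infinite) C) :
    samNum K ≤ #C := by
  classical
  let w : ℕ ↪ ↥(A 0) := (hinf 0).natEmbedding _
  have hwinj : Function.Injective (fun k => ((w k : ↥(A 0)) : K)) :=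
    Subtype.coe_injective.comp w.injective
  set W : Set K := Set.range (fun k => ((w k : ↥(A 0)) : K)) with hW
  have hWc : W.Countable := countable_range _
  have hWi : W.Infinite := infinite_range_of_injective hwinj
  let φ : {F : ℕ → Set K //
        (∀ n, (F n).Finite ∧ F n ⊆ A n) ∧ {n | (F n).Nonempty}.Infinite} →
      {S : Set K // S.Countable ∧ S.Infinite} := fun G =>
    ⟨(⋃ n, G.1 n) ∪ W,
      (countable_iUnion fun n => (G.2.1 n).1.countable).union hWc,
      hWi.mono subset_union_right⟩
  have hcof : RelCofinal
      (fun S T : {S : Set K // S.Countable ∧ S.Infinite} => (S.1 ∩ T.1).Infinite)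
      (φ '' C) := by
    intro S
    let e : ℕ ↪ ↥S.1 := S.2.2.natEmbedding _
    have heinj : Function.Injective (fun k => ((e k : ↥S.1) : K)) :=
      Subtype.coe_injective.comp e.injective
    have hx : ∀ k : ℕ, ∃ n, ((e k : ↥S.1) : K) ∈ A n := by
      intro k
      have : ((e k : ↥S.1) : K) ∈ ⋃ n, A n := by rw [hunion]; trivial
      exact mem_iUnion.mp this
    let N : ℕ → ℕ := fun k => (hx k).choose
    let m : ℕ → ℕ := fun k => (Finset.range (k + 1)).sup N + k
    have hmm : StrictMono m := by
      intro i j hij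
      have h1 : (Finset.range (i + 1)).sup N ≤ (Finset.range (j + 1)).sup N :=
        Finset.sup_mono (Finset.range_subset_range.mpr (by omega))
      simp only [m]
      omega
    have hmA : ∀ k, ((e k : ↥S.1) : K) ∈ A (m k) := by
      intro k
      refine hmono ?_ (hx k).choose_spec
      calc N k ≤ (Finset.range (k + 1)).sup N :=
            Finset.le_sup (Finset.self_mem_range_succ k)
        _ ≤ m k := Nat.le_add_right _ _
    set Fs : ℕ → Set K := fun n => {x | ∃ k, m k = n ∧ ((e k : ↥S.1) : K) = x} with hFs
    have hFsub : ∀ n, Fs n ⊆ A n := by rintro n x ⟨k, rfl, rfl⟩; exact hmA k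
    have hFfin : ∀ n, (Fs n).Finite := by
      intro n
      apply Set.Subsingleton.finite
      rintro x ⟨k, hk, rfl⟩ y ⟨k', hk', rfl⟩
      rw [hmm.injective (hk.trans hk'.symm)]
    have hFne : {n | (Fs n).Nonempty}.Infinite := by
      apply (infinite_range_of_injective hmm.injective).mono
      rintro n ⟨k, rfl⟩
      exact ⟨((e k : ↥S.1) : K), k, rfl, rfl⟩
    obtain ⟨G, hGC, hGR⟩ := hC ⟨Fs, fun n => ⟨hFfin n, hFsub n⟩, hFne⟩
    refine ⟨φ G, mem_image_of_mem φ hGC, ?_⟩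
    set Ks : Set ℕ := {k | ((e k : ↥S.1) : K) ∈ G.1 (m k)} with hKs
    have hsub : {n | (Fs n ∩ G.1 n).Nonempty} ⊆ m '' Ks := by
      rintro n ⟨x, ⟨k, hk, rfl⟩, hxG⟩
      exact ⟨k, by rw [hKs, mem_setOf_eq, hk]; exact hxG, hk⟩
    have hKinf : Ks.Infinite := by
      by_contra hfin
      rw [Set.not_infinite] at hfin
      exact hGR (Set.Finite.subset (hfin.image m) hsub)
    refine Set.Infinite.mono ?_ (hKinf.image (heinj.injOn))
    rintro x ⟨k, hkK, rfl⟩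
    exact ⟨(e k).2, Or.inl (mem_iUnion.mpr ⟨m k, hkK⟩)⟩
  calc samNum K ≤ #(φ '' C) := csInf_le' ⟨φ '' C, hcof, rfl⟩
    _ ≤ #C := mk_image_le

lemma bNum_le_of_cofinal (K : Type) (A : ℕ → Set K) (hmono : Monotone A)
    (hinf : ∀ n, (A n).Infinite)
    (C : Set {F : ℕ → Set K //
        (∀ n, (F n).Finite ∧ F n ⊆ A n) ∧ {n | (F n).Nonempty}.Infinite})
    (hC : RelCofinal (fun (F G : {F : ℕ → Set K //
        (∀ n, (F n).Finite ∧ F n ⊆ A n) ∧ {n | (F n).Nonempty}.Infinite}) =>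
      {n | (F.1 n ∩ G.1 n).Nonempty}.Infinite) C) :
    bNum ≤ #C := by
  classical
  let a : ℕ ↪ ↥(A 0) := (hinf 0).natEmbedding _
  let av : ℕ → K := fun k => ((a k : ↥(A 0)) : K)
  have havinj : Function.Injective av := Subtype.coe_injective.comp a.injective
  let idx : K → ℕ := fun x => if h : ∃ k, av k = x then h.choose else 0
  have hidx : ∀ k, idx (av k) = k := by
    intro k
    have h : ∃ j, av j = av k := ⟨k, rfl⟩
    simp only [idx, dif_pos h]
    exact havinj h.choose_spec
  let fG : {F : ℕ → Set K //
        (∀ n, (F n).Finite ∧ F n ⊆ A n) ∧ {n | (F n).Nonempty}.Infinite} → ℕ → ℕ :=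
    fun G n => (G.2.1 n).1.toFinset.sup idx + 1
  have hunb : ∀ g : ℕ → ℕ, ∃ f ∈ fG '' C, ¬ {n | g n ≤ f n}.Finite := by
    intro g
    have hsub : ∀ n, ({av (g n)} : Set K) ⊆ A n := by
      intro n x hx
      rw [mem_singleton_iff] at hx
      subst hx
      exact hmono (Nat.zero_le n) (a (g n)).2
    have hne : {n | ({av (g n)} : Set K).Nonempty}.Infinite := by
      have : {n | ({av (g n)} : Set K).Nonempty} = Set.univ := by
        ext n; simp
      rw [this]; exact Set.infinite_univ
    obtain ⟨G, hGC, hGR⟩ := hC ⟨fun n => {av (g n)},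
      fun n => ⟨finite_singleton _, hsub n⟩, hne⟩
    refine ⟨fG G, mem_image_of_mem _ hGC, ?_⟩
    intro hfin
    apply hGR
    apply hfin.subset
    rintro n ⟨x, hx1, hx2⟩
    rw [mem_singleton_iff] at hx1
    subst hx1
    have : g n ≤ (G.2.1 n).1.toFinset.sup idx := by
      have := Finset.le_sup (f := idx) ((G.2.1 n).1.mem_toFinset.mpr hx2)
      rwa [hidx] at this
    exact Nat.le_succ_of_le this
  calc bNum ≤ #(fG '' C) := csInf_le' ⟨fG '' C, hunb, rfl⟩
    _ ≤ #C := mk_image_le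
lemma relCof_le_sam_mul_b (K : Type) (hK : Cardinal.aleph0 < Cardinal.mk K)
    (A : ℕ → Set K) (hmono : Monotone A) (hinf : ∀ n, (A n).Infinite)
    (hunion : ⋃ n, A n = Set.univ) :
    relCof (fun (F G : {F : ℕ → Set K //
        (∀ n, (F n).Finite ∧ F n ⊆ A n) ∧ {n | (F n).Nonempty}.Infinite}) =>
      {n | (F.1 n ∩ G.1 n).Nonempty}.Infinite) ≤ samNum K * bNum := by
  classical
  obtain ⟨D, hD, hDcard⟩ := csInf_mem (samSet_nonempty K)
  obtain ⟨B, hB, hBcard⟩ := csInf_mem bSet_nonempty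
  -- monotone closure of the unbounded family
  let cl : (ℕ → ℕ) → ℕ → ℕ := fun f n => (Finset.range (n + 1)).sup f
  have hclmono : ∀ f, Monotone (cl f) := by
    intro f i j hij
    exact Finset.sup_mono (Finset.range_subset_range.mpr (by omega))
  have hclle : ∀ f n, f n ≤ cl f n := fun f n =>
    Finset.le_sup (Finset.self_mem_range_succ n)
  have hB' : ∀ g : ℕ → ℕ, ∃ f ∈ cl '' B, Monotone f ∧ ¬ {n | g n ≤ f n}.Finite := by
    intro g
    obtain ⟨f₀, hf₀B, hf₀⟩ := hB g
    refine ⟨cl f₀, mem_image_of_mem _ hf₀B, hclmono f₀, ?_⟩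
    intro hfin
    exact hf₀ (hfin.subset fun n hn => le_trans hn (hclle f₀ n))
  -- enumerations of the sam family members
  have hESex : ∀ S : {S : Set K // S.Countable ∧ S.Infinite},
      ∃ e : ℕ → K, S.1 = Set.range e := fun S =>
    S.2.1.exists_eq_range S.2.2.nonempty
  let ES : {S : Set K // S.Countable ∧ S.Infinite} → ℕ → K := fun S => (hESex S).choose
  have hES : ∀ S, S.1 = Set.range (ES S) := fun S => (hESex S).choose_spec
  -- witnesses for membership in the A n's
  have hnAex : ∀ x : K, ∃ n, x ∈ A n := by
    intro x
    have : x ∈ ⋃ n, A n := by rw [hunion]; trivial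
    exact mem_iUnion.mp this
  let nA : K → ℕ := fun x => (hnAex x).choose
  have hnA : ∀ x, x ∈ A (nA x) := fun x => (hnAex x).choose_spec
  -- the two kinds of members of the cofinal family
  let Φ : {S : Set K // S.Countable ∧ S.Infinite} × (ℕ → ℕ) →
      {F : ℕ → Set K //
        (∀ n, (F n).Finite ∧ F n ⊆ A n) ∧ {n | (F n).Nonempty}.Infinite} := fun p =>
    ⟨fun n => (ES p.1 '' Set.Iic (p.2 n)) ∩ A n,
      fun n => ⟨((Set.finite_Iic _).image _).inter_of_left _, inter_subset_right⟩, by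
        apply (Set.Ici_infinite (nA (ES p.1 0))).mono
        intro n hn
        exact ⟨ES p.1 0, ⟨0, mem_Iic.mpr (Nat.zero_le _), rfl⟩, hmono hn (hnA _)⟩⟩
  let Ψ : K → {F : ℕ → Set K //
        (∀ n, (F n).Finite ∧ F n ⊆ A n) ∧ {n | (F n).Nonempty}.Infinite} := fun x =>
    ⟨fun n => {x} ∩ A n,
      fun n => ⟨(finite_singleton x).inter_of_left _, inter_subset_right⟩, by
        apply (Set.Ici_infinite (nA x)).mono
        intro n hn
        exact ⟨x, rfl, hmono hn (hnA x)⟩⟩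
  set C := Φ '' (D ×ˢ (cl '' B)) ∪ Ψ '' Set.univ with hCdef
  have hcof : RelCofinal (fun (F G : {F : ℕ → Set K //
        (∀ n, (F n).Finite ∧ F n ⊆ A n) ∧ {n | (F n).Nonempty}.Infinite}) =>
      {n | (F.1 n ∩ G.1 n).Nonempty}.Infinite) C := by
    intro F
    by_cases hT : (⋃ n, F.1 n).Infinite
    · have hTc : (⋃ n, F.1 n).Countable :=
        countable_iUnion fun n => (F.2.1 n).1.countable
      obtain ⟨S, hSD, hSint⟩ := hD ⟨⋃ n, F.1 n, hTc, hT⟩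
      set N : Set ℕ := {n | (F.1 n ∩ S.1).Nonempty} with hN
      have hNinf : N.Infinite := by
        by_contra hfin
        rw [Set.not_infinite] at hfin
        apply hSint
        apply Set.Finite.subset (hfin.biUnion fun n _ => (F.2.1 n).1)
        rintro x ⟨hx1, hx2⟩
        obtain ⟨n, hn⟩ := mem_iUnion.mp hx1
        exact mem_biUnion (⟨x, hn, hx2⟩ : n ∈ N) hn
      let ν : ℕ → ℕ := Nat.nth (· ∈ N)
      have hνmono : StrictMono ν := Nat.nth_strictMono hNinf
      have hνmem : ∀ m, ν m ∈ N := fun m => Nat.nth_mem_of_infinite hNinf m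
      have hk : ∀ m : ℕ, ∃ k, ES S k ∈ F.1 (ν m) := by
        intro m
        obtain ⟨y, hy1, hy2⟩ := hνmem m
        obtain ⟨k, hk⟩ := (hES S ▸ hy2 : y ∈ Set.range (ES S))
        exact ⟨k, hk ▸ hy1⟩
      let g : ℕ → ℕ := fun m => (hk m).choose
      obtain ⟨f, hfB', hfmono, hfunb⟩ := hB' g
      refine ⟨Φ (S, f), mem_union_left _ (mem_image_of_mem _ (mk_mem_prod hSD hfB')), ?_⟩
      have hsub : ν '' {m | g m ≤ f m} ⊆
          {n | (F.1 n ∩ ((ES S '' Set.Iic (f n)) ∩ A n)).Nonempty} := by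
        rintro n ⟨m, hm, rfl⟩
        refine ⟨ES S (g m), (hk m).choose_spec,
          ⟨⟨g m, mem_Iic.mpr (le_trans hm (hfmono hνmono.le_apply)), rfl⟩, ?_⟩⟩
        exact (F.2.1 (ν m)).2 (hk m).choose_spec
      exact Set.Infinite.mono hsub (Set.Infinite.image hνmono.injective.injOn hfunb)
    · rw [Set.not_infinite] at hT
      have hcover : {n | (F.1 n).Nonempty} ⊆ ⋃ x ∈ (⋃ n, F.1 n), {n | x ∈ F.1 n} := by
        rintro n ⟨x, hx⟩
        exact mem_biUnion (mem_iUnion.mpr ⟨n, hx⟩) hx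
      have hex : ∃ x, {n | x ∈ F.1 n}.Infinite := by
        by_contra hall
        push_neg at hall
        exact F.2.2 ((hT.biUnion fun x _ => hall x).subset hcover)
      obtain ⟨x, hx⟩ := hex
      refine ⟨Ψ x, mem_union_right _ (mem_image_of_mem _ (mem_univ x)), ?_⟩
      apply hx.mono
      intro n hn
      exact ⟨x, hn, rfl, (F.2.1 n).2 hn⟩
  -- cardinality computation
  have hsamb : ℵ₀ ≤ samNum K * bNum := by
    calc ℵ₀ ≤ samNum K := le_trans hK.le (mk_le_samNum K hK)
      _ = samNum K * 1 := (mul_one _).symm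
      _ ≤ samNum K * bNum := mul_le_mul_right (le_trans Cardinal.one_le_aleph0 aleph0_le_bNum) _
  have hKle : #K ≤ samNum K * bNum := by
    calc #K ≤ samNum K := mk_le_samNum K hK
      _ = samNum K * 1 := (mul_one _).symm
      _ ≤ samNum K * bNum := mul_le_mul_right (le_trans Cardinal.one_le_aleph0 aleph0_le_bNum) _
  have hcard : #C ≤ samNum K * bNum := by
    have h1 : #C ≤ #(Φ '' (D ×ˢ (cl '' B))) + #(Ψ '' (Set.univ : Set K)) :=
      (hCdef ▸ mk_union_le _ _)
    have h2 : #(Φ '' (D ×ˢ (cl '' B))) ≤ samNum K * bNum := by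
      calc #(Φ '' (D ×ˢ (cl '' B))) ≤ #(D ×ˢ (cl '' B) :
            Set ({S : Set K // S.Countable ∧ S.Infinite} × (ℕ → ℕ))) := mk_image_le
        _ = #D * #(cl '' B) := by
            rw [mk_congr (Equiv.Set.prod D (cl '' B)), Cardinal.mk_prod,
              Cardinal.lift_id, Cardinal.lift_id]
        _ ≤ samNum K * bNum := by
            refine mul_le_mul' (le_of_eq hDcard) ?_
            exact le_trans mk_image_le (le_of_eq hBcard)
    have h3 : #(Ψ '' (Set.univ : Set K)) ≤ samNum K * bNum := by
      refine le_trans (le_trans mk_image_le ?_) hKle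
      exact le_of_eq (Cardinal.mk_univ)
    calc #C ≤ #(Φ '' (D ×ˢ (cl '' B))) + #(Ψ '' (Set.univ : Set K)) := h1
      _ ≤ samNum K * bNum + (samNum K * bNum) := add_le_add h2 h3
      _ = samNum K * bNum := Cardinal.add_eq_self hsamb
  exact le_trans (csInf_le' ⟨C, hcof, rfl⟩) hcard
/-- For uncountable κ and an increasing sequence of infinite cardinals κ_n with
supremum κ (realized as an increasing sequence of infinite subsets A n of a set K
of size κ, with union K), the cofinality of ((∏_n [κ_n]^{<ω})_∞, i_∞) is
sam(κ) · 𝔟. -/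
theorem stmt14 (K : Type) (hK : Cardinal.aleph0 < Cardinal.mk K)
    (A : ℕ → Set K) (hmono : Monotone A) (hinf : ∀ n, (A n).Infinite)
    (hunion : ⋃ n, A n = Set.univ) :
    relCof (fun (F G : {F : ℕ → Set K //
        (∀ n, (F n).Finite ∧ F n ⊆ A n) ∧ {n | (F n).Nonempty}.Infinite}) =>
      {n | (F.1 n ∩ G.1 n).Nonempty}.Infinite) = samNum K * bNum := by
  apply le_antisymm
  · exact relCof_le_sam_mul_b K hK A hmono hinf hunion
  · rw [Cardinal.mul_eq_max (le_trans hK.le (mk_le_samNum K hK)) aleph0_le_bNum]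
    refine le_csInf ⟨#(Set.univ : Set {F : ℕ → Set K //
        (∀ n, (F n).Finite ∧ F n ⊆ A n) ∧ {n | (F n).Nonempty}.Infinite}),
      Set.univ, fun F => ⟨F, mem_univ F, ?_⟩, rfl⟩ ?_
    · show {n | (F.1 n ∩ F.1 n).Nonempty}.Infinite
      have : {n | (F.1 n ∩ F.1 n).Nonempty} = {n | (F.1 n).Nonempty} := by
        simp [Set.inter_self]
      rw [this]
      exact F.2.2
    · rintro c ⟨C, hC, rfl⟩
      exact max_le (samNum_le_of_cofinal K A hmono hinf hunion C hC)
        (bNum_le_of_cofinal K A hmono hinf C hC)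
end

section
/- The relation ((∏_n [κ_n]^{<ω})_∞, i_∞) is Tukey above ([κ]^ω, ii), where κ = sup_n κ_n with each κ_n an infinite cardinal. -/
open Cardinal Set

universe u v w x

/-- ((∏_n [κ_n]^{<ω})_∞, i_∞) is Tukey above ([κ]^ω, ii), where κ = sup_n κ_n
(realized as an increasing sequence of infinite subsets A n of a set K, with
union K). -/
theorem stmt15 (K : Type u)
    (A : ℕ → Set K) (hmono : Monotone A) (hinf : ∀ n, (A n).Infinite)
    (hunion : ⋃ n, A n = Set.univ) :
    TukeyLE (fun (F G : {F : ℕ → Set K //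
        (∀ n, (F n).Finite ∧ F n ⊆ A n) ∧ {n | (F n).Nonempty}.Infinite}) =>
      {n | (F.1 n ∩ G.1 n).Nonempty}.Infinite)
      (fun S T : {S : Set K // S.Countable ∧ S.Infinite} => (S.1 ∩ T.1).Infinite) := by
  classical
  -- a fixed countable infinite set, for junk values
  obtain ⟨D, hDcnt, hDinf⟩ : ∃ D : Set K, D.Countable ∧ D.Infinite := by
    let e := (hinf 0).natEmbedding
    refine ⟨Set.range (fun n => (e n : K)), Set.countable_range _,
      Set.infinite_range_of_injective ?_⟩
    intro a b h
    exact e.injective (Subtype.ext h)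
  refine ⟨fun G => if h : (⋃ n, G.1 n).Infinite then
      ⟨⋃ n, G.1 n, Set.countable_iUnion (fun n => (G.2.1 n).1.countable), h⟩
    else ⟨D, hDcnt, hDinf⟩, ?_⟩
  intro C hC S
  -- enumerate S injectively
  haveI := S.2.1.to_subtype
  haveI := S.2.2.to_subtype
  obtain ⟨e⟩ : Nonempty (ℕ ≃ S.1) := nonempty_equiv_of_countable
  set s : ℕ → K := fun k => (e k : K) with hs
  have hsinj : Function.Injective s := fun a b h => e.injective (Subtype.ext h)
  have hsmem : ∀ k, s k ∈ S.1 := fun k => (e k).2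
  -- each point eventually in A n
  have hin : ∀ x : K, ∃ m, ∀ n ≥ m, x ∈ A n := by
    intro x
    have : x ∈ ⋃ n, A n := by rw [hunion]; trivial
    obtain ⟨m, hm⟩ := Set.mem_iUnion.1 this
    exact ⟨m, fun n hn => hmono hn hm⟩
  obtain ⟨m0, hm0⟩ := hin (s 0)
  set c : ℕ → ℕ := fun n => Nat.findGreatest (fun k => s k ∈ A n) n with hc
  set F : ℕ → Set K := fun n => if s 0 ∈ A n then {s (c n)} else ∅ with hF
  have hFval : ∀ n ≥ m0, F n = {s (c n)} ∧ s (c n) ∈ A n := by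
    intro n hn
    have h0 : s 0 ∈ A n := hm0 n hn
    exact ⟨if_pos h0, Nat.findGreatest_spec (P := fun k => s k ∈ A n) (Nat.zero_le n) h0⟩
  have hFsub : ∀ n, (F n).Finite ∧ F n ⊆ A n := by
    intro n
    by_cases h0 : s 0 ∈ A n
    · refine ⟨?_, ?_⟩
      · simp only [hF, if_pos h0]; exact Set.finite_singleton _
      · simp only [hF, if_pos h0]
        intro x hx
        rw [Set.mem_singleton_iff] at hx
        subst hx
        exact Nat.findGreatest_spec (P := fun k => s k ∈ A n) (Nat.zero_le n) h0
    · simp only [hF, if_neg h0]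
      exact ⟨Set.finite_empty, Set.empty_subset _⟩
  have hFne : {n | (F n).Nonempty}.Infinite := by
    refine Set.Infinite.mono ?_ (Set.Ici_infinite m0)
    intro n hn
    show (F n).Nonempty
    rw [(hFval n hn).1]
    exact Set.singleton_nonempty _
  obtain ⟨G, hGC, hGF⟩ := hC ⟨F, hFsub, hFne⟩
  -- key: for each k there is j ≥ k with s j ∈ ⋃ G
  have key : ∀ k, ∃ j, k ≤ j ∧ s j ∈ ⋃ n, G.1 n := by
    intro k
    obtain ⟨m, hm⟩ := hin (s k)
    obtain ⟨n, hnN, hn⟩ := hGF.exists_gt (max m (max k m0))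
    have hnm : m ≤ n := le_of_lt (lt_of_le_of_lt (le_max_left _ _) hn)
    have hnk : k ≤ n := le_of_lt (lt_of_le_of_lt (le_trans (le_max_left _ _) (le_max_right _ _)) hn)
    have hnm0 : m0 ≤ n := le_of_lt (lt_of_le_of_lt (le_trans (le_max_right _ _) (le_max_right _ _)) hn)
    have hck : k ≤ c n := Nat.le_findGreatest hnk (hm n hnm)
    obtain ⟨x, hx1, hx2⟩ := hnN
    rw [show (⟨F, hFsub, hFne⟩ : {F : ℕ → Set K //
        (∀ n, (F n).Finite ∧ F n ⊆ A n) ∧ {n | (F n).Nonempty}.Infinite}).1 = F from rfl,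
      (hFval n hnm0).1, Set.mem_singleton_iff] at hx1
    subst hx1
    exact ⟨c n, hck, Set.mem_iUnion.2 ⟨n, hx2⟩⟩
  have hinter : (S.1 ∩ ⋃ n, G.1 n).Infinite := by
    have hJ : {j | s j ∈ ⋃ n, G.1 n}.Infinite := by
      intro hfin
      obtain ⟨b, hb⟩ := hfin.bddAbove
      obtain ⟨j, hjk, hj⟩ := key (b + 1)
      exact absurd (hb hj) (by omega)
    have := hJ.image (Set.injOn_of_injective hsinj)
    refine this.mono ?_
    rintro _ ⟨j, hj, rfl⟩
    exact ⟨hsmem j, hj⟩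
  have hGinf : (⋃ n, G.1 n).Infinite := fun h => hinter (h.subset Set.inter_subset_right)
  refine ⟨_, ⟨G, hGC, rfl⟩, ?_⟩
  simp only [dif_pos hGinf]
  exact hinter
end

section
/- For the relation P(ω) = (([ω]^{<ω})^ω_∞, i_∞), P(ω) is Tukey equivalent to (ω^ω, ≤_∞), where f ≤_∞ g iff f(n) ≤ g(n) for infinitely many n; hence cof(P(ω)) = 𝔟. -/
open Cardinal Set

universe u v w x

abbrev PT := {F : ℕ → Set ℕ // (∀ n, (F n).Finite) ∧ {n | (F n).Nonempty}.Infinite}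

def Rrel : PT → PT → Prop := fun F G => {n | (F.1 n ∩ G.1 n).Nonempty}.Infinite
def Srel : (ℕ → ℕ) → (ℕ → ℕ) → Prop := fun f g => {n | f n ≤ g n}.Infinite

lemma tukey1 : TukeyLE Rrel Srel := by
  refine ⟨fun G n => (G.2.1 n).toFinset.sup id, ?_⟩
  intro C hC g
  obtain ⟨G, hGC, hR⟩ := hC ⟨fun n => {g n}, fun n => Set.finite_singleton _, by
    show {n | ({g n} : Set ℕ).Nonempty}.Infinite
    have h : {n : ℕ | ({g n} : Set ℕ).Nonempty} = Set.univ :=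
      Set.eq_univ_of_forall (fun n => Set.singleton_nonempty (g n))
    rw [h]
    exact Set.infinite_univ⟩
  refine ⟨_, Set.mem_image_of_mem _ hGC, hR.mono ?_⟩
  intro n hn
  obtain ⟨x, hx1, hx2⟩ := hn
  have hx1' : x = g n := hx1
  subst hx1'
  exact Finset.le_sup (f := id) ((G.2.1 n).mem_toFinset.mpr hx2)

lemma tukey2 : TukeyLE Srel Rrel := by
  refine ⟨fun g => ⟨fun n => Set.Iic ((Finset.range (n+1)).sup g),
    fun n => Set.finite_Iic _, by
      show {n | (Set.Iic ((Finset.range (n+1)).sup g)).Nonempty}.Infinite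
      have h : {n : ℕ | (Set.Iic ((Finset.range (n+1)).sup g)).Nonempty} = Set.univ :=
        Set.eq_univ_of_forall (fun n => Set.nonempty_Iic)
      rw [h]
      exact Set.infinite_univ⟩, ?_⟩
  intro C hC G
  have hA := G.2.2
  have hm : ∀ n : ℕ, ∃ m, (G.1 m).Nonempty ∧ n < m := by
    intro n
    obtain ⟨m, hm1, hm2⟩ := hA.exists_gt n
    exact ⟨m, hm1, hm2⟩
  choose m hmne hmlt using hm
  obtain ⟨g, hgC, hg⟩ := hC (fun n => sInf (G.1 (m n)))
  refine ⟨_, Set.mem_image_of_mem _ hgC, ?_⟩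
  have key : ∀ N, ∃ k ∈ {k | (G.1 k ∩ Set.Iic ((Finset.range (k+1)).sup g)).Nonempty}, N < k := by
    intro N
    obtain ⟨n, hn1, hn2⟩ := hg.exists_gt N
    refine ⟨m n, ⟨sInf (G.1 (m n)), Nat.sInf_mem (hmne n), ?_⟩, lt_trans hn2 (hmlt n)⟩
    exact le_trans hn1 (Finset.le_sup (f := g) (Finset.mem_range.mpr (Nat.lt_succ_of_lt (hmlt n))))
  exact Set.infinite_of_not_bddAbove (by
    rintro ⟨N, hN⟩
    obtain ⟨k, hk1, hk2⟩ := key N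
    exact absurd (hN hk1) (not_le.mpr hk2))

lemma relCof_le_of_tukey {α : Type u} {β : Type v} {γ : Type w} {δ : Type v}
    (R : α → β → Prop) (S : γ → δ → Prop) (h : TukeyLE R S)
    (hne : ∀ a : α, ∃ b, R a b) : relCof S ≤ relCof R := by
  obtain ⟨φ, hφ⟩ := h
  have hne' : {c | ∃ C : Set β, RelCofinal R C ∧ #C = c}.Nonempty :=
    ⟨#(Set.univ : Set β), Set.univ, fun a => (hne a).imp (fun b hb => ⟨Set.mem_univ b, hb⟩), rfl⟩
  obtain ⟨C, hC, hCc⟩ := csInf_mem hne'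
  calc relCof S ≤ #(φ '' C) := csInf_le' ⟨φ '' C, hφ C hC, rfl⟩
    _ ≤ #C := Cardinal.mk_image_le
    _ = relCof R := hCc

lemma srel_cof : relCof Srel = bNum := rfl

/-- P(ω) is Tukey equivalent to (ω^ω, ≤_∞), and hence cof(P(ω)) = 𝔟. -/
theorem stmt16 :
    TukeyLE (fun (F G : {F : ℕ → Set ℕ //
        (∀ n, (F n).Finite) ∧ {n | (F n).Nonempty}.Infinite}) =>
      {n | (F.1 n ∩ G.1 n).Nonempty}.Infinite)
      (fun f g : ℕ → ℕ => {n | f n ≤ g n}.Infinite) ∧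
    TukeyLE (fun f g : ℕ → ℕ => {n | f n ≤ g n}.Infinite)
      (fun (F G : {F : ℕ → Set ℕ //
        (∀ n, (F n).Finite) ∧ {n | (F n).Nonempty}.Infinite}) =>
      {n | (F.1 n ∩ G.1 n).Nonempty}.Infinite) ∧
    relCof (fun (F G : {F : ℕ → Set ℕ //
        (∀ n, (F n).Finite) ∧ {n | (F n).Nonempty}.Infinite}) =>
      {n | (F.1 n ∩ G.1 n).Nonempty}.Infinite) = bNum := by
  refine ⟨tukey1, tukey2, ?_⟩
  have h1 : relCof Srel ≤ relCof Rrel :=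
    relCof_le_of_tukey _ _ tukey1 (fun F => ⟨F, by simpa [Rrel] using F.2.2⟩)
  have h2 : relCof Rrel ≤ relCof Srel :=
    relCof_le_of_tukey _ _ tukey2 (fun f => ⟨f, by simpa [Srel] using Set.infinite_univ⟩)
  exact le_antisymm h2 h1 |>.trans srel_cof
end

section
/- Let M be a separable metrizable space that is locally small. Then |M| < 𝔠, and hence M is totally imperfect (every compact subset of M is countable). -/
open Cardinal Set

universe u v w x

theorem aleph0_lt_cof_continuum : ℵ₀ < (Cardinal.continuum.{u}).ord.cof := by
  by_contra hle
  push_neg at hle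
  have h1 : Cardinal.continuum.{u} < Cardinal.continuum ^ (Cardinal.continuum.{u}).ord.cof :=
    Cardinal.lt_power_cof aleph0_le_continuum
  have h2 : Cardinal.continuum.{u} ^ (Cardinal.continuum.{u}).ord.cof ≤
      Cardinal.continuum ^ (ℵ₀ : Cardinal.{u}) :=
    Cardinal.power_le_power_left continuum_ne_zero hle
  rw [continuum_power_aleph0] at h2
  exact absurd (h1.trans_le h2) (lt_irrefl _)

/-- A second countable T1 space has at most continuum many points. -/
theorem mk_le_continuum_of_secondCountable (M : Type u) [TopologicalSpace M]
    [SecondCountableTopology M] [T1Space M] :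
    #M ≤ Cardinal.continuum := by
  obtain ⟨b, hbc, -, hb⟩ := TopologicalSpace.exists_countable_basis M
  set f : M → Set b := fun x => {t | x ∈ (t : Set M)} with hf
  have hinj : Function.Injective f := by
    intro x y hxy
    by_contra hne
    obtain ⟨U, hUo, hxU, hyU⟩ := t1Space_iff_exists_open.mp ‹T1Space M› hne
    obtain ⟨t, htb, hxt, htU⟩ := hb.exists_subset_of_mem_open hxU hUo
    have : (⟨t, htb⟩ : b) ∈ f x := hxt
    rw [hxy] at this
    exact hyU (htU this)
  calc #M ≤ #(Set b) := Cardinal.mk_le_of_injective hinj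
    _ = 2 ^ #b := by simp [Set]
    _ ≤ 2 ^ (ℵ₀ : Cardinal.{u}) := by
        apply Cardinal.power_le_power_left two_ne_zero
        exact (Cardinal.mk_le_aleph0_iff.mpr hbc)
    _ = Cardinal.continuum := Cardinal.two_power_aleph0

/-- A locally small separable metrizable space has size < 𝔠 and is totally
imperfect: every compact subset is countable. -/
theorem stmt18 (M : Type u) [TopologicalSpace M] [TopologicalSpace.SeparableSpace M]
    [TopologicalSpace.MetrizableSpace M]
    (h : ∀ x : M, ∃ U : Set M, IsOpen U ∧ x ∈ U ∧ #U < #M) :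
    #M < Cardinal.continuum ∧ ∀ K : Set M, IsCompact K → K.Countable := by
  letI := TopologicalSpace.metrizableSpaceMetric M
  haveI : SecondCountableTopology M :=
    UniformSpace.secondCountable_of_separable M
  have hle : #M ≤ Cardinal.continuum := mk_le_continuum_of_secondCountable M
  have hlt : #M < Cardinal.continuum := by
    rcases lt_or_eq_of_le hle with hlt | heq
    · exact hlt
    · exfalso
      obtain ⟨b, hbc, -, hb⟩ := TopologicalSpace.exists_countable_basis M
      set S : Set (Set M) := {t ∈ b | #t < #M} with hS
      have hcov : ⋃₀ S = Set.univ := by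
        apply eq_univ_of_forall
        intro x
        obtain ⟨U, hUo, hxU, hUlt⟩ := h x
        obtain ⟨t, htb, hxt, htU⟩ := hb.exists_subset_of_mem_open hxU hUo
        exact ⟨t, ⟨htb, (Cardinal.mk_le_mk_of_subset htU).trans_lt hUlt⟩, hxt⟩
      have hSc : #S ≤ ℵ₀ := Cardinal.mk_le_aleph0_iff.mpr (hbc.mono (sep_subset _ _))
      have hsup : (⨆ s : S, #s) < Cardinal.continuum := by
        refine Ordinal.iSup_lt (hSc.trans_lt aleph0_lt_cof_continuum) ?_
        rintro ⟨s, -, hs⟩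
        exact heq ▸ hs
      have : #M ≤ #S * ⨆ s : S, #s := by
        calc #M = #(⋃₀ S) := by rw [hcov, Cardinal.mk_univ]
          _ ≤ #S * ⨆ s : S, #s := Cardinal.mk_sUnion_le S
      have : Cardinal.continuum ≤ #S * ⨆ s : S, #s := heq ▸ this
      exact absurd (Cardinal.mul_lt_of_lt aleph0_le_continuum
        (hSc.trans_lt aleph0_lt_continuum) hsup) (not_lt.mpr this)
  refine ⟨hlt, fun K hK => ?_⟩
  by_contra hunc
  haveI : CompactSpace K := isCompact_iff_compactSpace.mp hK
  haveI : PolishSpace K := by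
    infer_instance
  obtain ⟨f, -, -, finj⟩ := isClosed_univ.exists_nat_bool_injection_of_not_countable (α := K)
    (by rwa [← countable_coe_iff, (Equiv.Set.univ _).countable_iff, countable_coe_iff])
  have hK1 : Cardinal.continuum ≤ #K := by
    have := Cardinal.lift_mk_le_lift_mk_of_injective finj
    simp only [Cardinal.mk_arrow, Cardinal.mk_bool, Cardinal.mk_nat, Cardinal.lift_id,
      Cardinal.lift_uzero, Cardinal.lift_two_power, Cardinal.lift_aleph0,
      Cardinal.two_power_aleph0, Cardinal.lift_continuum] at this
    exact this
  exact absurd ((hK1.trans (Cardinal.mk_le_mk_of_subset (subset_univ K))).trans_lt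
    (by simpa using hlt)) (lt_irrefl _)
end

section
/- Let N be a set (with the discrete relation structure arising from a separable metrizable space of size < 𝔠) and consider M = N^ω. Then the compact-cover relation kc(N^ω) satisfies kc(N^ω) ≥_T ([N]^ω, ⊆) via the maps φ_+(K) = ∪_n π_n(K) (when infinite) and ψ_-({s_n : n ∈ ω}) = (s_n)_n; consequently the least number of compact sets needed to cover N^ω is at least cov(|N|). -/
open Cardinal Set

universe u v w x

lemma compact_countable_aux {N : Type u} [TopologicalSpace N]
    [TopologicalSpace.MetrizableSpace N] (hN : #N < Cardinal.continuum)
    {K : Set N} (hK : IsCompact K) : K.Countable := by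
  by_contra h
  haveI : CompactSpace K := isCompact_iff_compactSpace.mp hK
  haveI : PolishSpace K := by
    letI := TopologicalSpace.metrizableSpaceMetric K
    infer_instance
  have hunc : ¬(univ : Set K).Countable := by
    rwa [Set.countable_univ_iff, Set.countable_coe_iff]
  obtain ⟨f, -, -, hf⟩ := isClosed_univ.exists_nat_bool_injection_of_not_countable hunc
  have h1 : Cardinal.lift.{u} #(ℕ → Bool) ≤ Cardinal.lift.{0} #K :=
    Cardinal.lift_mk_le_lift_mk_of_injective hf
  have h2 : #(ℕ → Bool) = Cardinal.continuum := by
    simp [Cardinal.mk_arrow, Cardinal.two_power_aleph0]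
  rw [h2, Cardinal.lift_continuum, Cardinal.lift_id'] at h1
  have h3 : #K ≤ #N := Cardinal.mk_le_of_injective Subtype.val_injective
  exact absurd (h1.trans h3) (not_le.mpr hN)

/-- For separable metrizable N of size < 𝔠, the compact-cover relation of N^ω is
Tukey above ([N]^ω, ⊆); consequently kc(N^ω) ≥ cov(|N|). -/
theorem stmt19 (N : Type u) [TopologicalSpace N] [TopologicalSpace.SeparableSpace N]
    [TopologicalSpace.MetrizableSpace N] [Infinite N]
    (hN : #N < Cardinal.continuum) :
    TukeyLE (fun (x : ℕ → N) (K : {K : Set (ℕ → N) // IsCompact K}) => x ∈ K.1)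
      (fun S T : {S : Set N // S.Countable ∧ S.Infinite} => S.1 ⊆ T.1) ∧
    relCof (fun S T : {S : Set N // S.Countable ∧ S.Infinite} => S.1 ⊆ T.1) ≤
      relCof (fun (x : ℕ → N) (K : {K : Set (ℕ → N) // IsCompact K}) => x ∈ K.1) := by
  set A : Set N := Set.range (Infinite.natEmbedding N) with hA
  have hAc : A.Countable := Set.countable_range _
  have hAi : A.Infinite := Set.infinite_range_of_injective (Infinite.natEmbedding N).injective
  let φ : {K : Set (ℕ → N) // IsCompact K} → {S : Set N // S.Countable ∧ S.Infinite} :=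
    fun K => ⟨A ∪ ⋃ n : ℕ, (fun x => x n) '' K.1,
      ⟨hAc.union (Set.countable_iUnion fun n =>
        compact_countable_aux hN (K.2.image (continuous_apply n))),
       hAi.mono Set.subset_union_left⟩⟩
  have key : ∀ C : Set {K : Set (ℕ → N) // IsCompact K},
      RelCofinal (fun (x : ℕ → N) (K : {K : Set (ℕ → N) // IsCompact K}) => x ∈ K.1) C →
      RelCofinal (fun S T : {S : Set N // S.Countable ∧ S.Infinite} => S.1 ⊆ T.1) (φ '' C) := by
    intro C hC S
    obtain ⟨e, he⟩ := S.2.1.exists_eq_range S.2.2.nonempty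
    obtain ⟨K, hKC, hxK⟩ := hC e
    refine ⟨φ K, Set.mem_image_of_mem φ hKC, ?_⟩
    intro s hs
    rw [he] at hs
    obtain ⟨n, rfl⟩ := hs
    exact Set.mem_union_right _ (Set.mem_iUnion.mpr ⟨n, ⟨e, hxK, rfl⟩⟩)
  refine ⟨⟨φ, key⟩, ?_⟩
  have hne : {c | ∃ C : Set {K : Set (ℕ → N) // IsCompact K},
      RelCofinal (fun (x : ℕ → N) (K : {K : Set (ℕ → N) // IsCompact K}) => x ∈ K.1) C ∧
      #C = c}.Nonempty := by
    refine ⟨#(univ : Set {K : Set (ℕ → N) // IsCompact K}), univ, fun x => ?_, rfl⟩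
    exact ⟨⟨{x}, isCompact_singleton⟩, Set.mem_univ _, rfl⟩
  obtain ⟨C₀, hC₀, hcard⟩ := csInf_mem hne
  calc relCof (fun S T : {S : Set N // S.Countable ∧ S.Infinite} => S.1 ⊆ T.1)
      ≤ #(φ '' C₀) := csInf_le' ⟨φ '' C₀, key C₀ hC₀, rfl⟩
    _ ≤ #C₀ := Cardinal.mk_image_le
    _ = _ := hcard
end
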